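/- arXiv:1903.04322 — 5 statements merged into one kernel-verified Lean document; each statement's English description precedes it below -/
import Mathlib

section
/- The linear map S commutes with ⋀^n(J_{2n}), i.e., S ∘ ⋀^n(J_{2n}) = ⋀^n(J_{2n}) ∘ S as endomorphisms of ⋀^n(ℂ^{2n}). -/
open Matrix

/-- The set of `n`-element subsets of `{1, …, 2n}` (realized as `Fin (2*n)`), indexing the
standard basis `e_I = e_{i₁} ∧ ⋯ ∧ e_{iₙ}` of the `n`-th exterior power `⋀ⁿ(ℂ^{2n})`. -/
abbrev Idx (n : ℕ) := {I : Finset (Fin (2 * n)) // I.card = n}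

/-- The matrix of the induced linear map `⋀ⁿ(g)` on `⋀ⁿ(ℂ^{2n})` in the standard basis
`{e_I}`: its `(I, J)` entry is the `n × n` minor of `g` with rows `I` and columns `J`
(both taken in increasing order), i.e. the coefficient of `e_I` in `⋀ⁿ(g)(e_J)`. -/
noncomputable def wedgePow (n : ℕ) (g : Matrix (Fin (2 * n)) (Fin (2 * n)) ℂ) :
    Matrix (Idx n) (Idx n) ℂ := fun I J =>
  Matrix.det (Matrix.of fun a b : Fin n =>
    g ((I.1.orderIsoOfFin I.2 a).1) ((J.1.orderIsoOfFin J.2 b).1))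

/-- `qCoeff n I J = q(e_I, e_J)`, the coefficient of `e_1 ∧ ⋯ ∧ e_{2n}` in `e_I ∧ e_J`:
it is `0` unless `J = Iᶜ`, in which case it is the sign `(-1)^{#{(i,j) ∈ I × J : i > j}}`
obtained by sorting the concatenation of the increasing enumerations of `I` and `J`. -/
noncomputable def qCoeff (n : ℕ) (I J : Idx n) : ℂ :=
  if (J : Finset (Fin (2 * n))) = (I : Finset (Fin (2 * n)))ᶜ then
    (-1 : ℂ) ^ (((I.1 ×ˢ J.1).filter fun p => p.2 < p.1).card)
  else 0

/-- The bilinear form `q` on `⋀ⁿ(ℂ^{2n})` defined by `v ∧ w = q(v, w) • e_1 ∧ ⋯ ∧ e_{2n}`,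
written in coordinates with respect to the basis `{e_I}` (a vector of `⋀ⁿ(ℂ^{2n})` is
recorded by its coordinate function `Idx n → ℂ`). -/
noncomputable def q (n : ℕ) (v w : Idx n → ℂ) : ℂ :=
  ∑ I : Idx n, ∑ J : Idx n, v I * w J * qCoeff n I J

/-- The basis vector `e_I` of `⋀ⁿ(ℂ^{2n})`, in coordinates. -/
noncomputable def eVec (n : ℕ) (I : Idx n) : Idx n → ℂ :=
  fun J => if J = I then 1 else 0

/-- The complement `Iᶜ` of an `n`-element subset of `{1, …, 2n}`. -/
def complIdx (n : ℕ) (I : Idx n) : Idx n :=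
  ⟨(I : Finset (Fin (2 * n)))ᶜ, by
    rw [Finset.card_compl, I.2, Fintype.card_fin]; omega⟩

/-- The matrix (in the basis `{e_I}`) of the linear map `S` on `⋀ⁿ(ℂ^{2n})` defined by
`S(e_I) = q(e_{Iᶜ}, e_I) • e_{Iᶜ}`. -/
noncomputable def Smat (n : ℕ) : Matrix (Idx n) (Idx n) ℂ := fun I J =>
  if I = complIdx n J then qCoeff n (complIdx n J) J else 0

/-- The `n × n` matrix `w_n` with entries `1` at positions `(i, n+1-i)` and `0` elsewhere. -/
noncomputable def wnMat (n : ℕ) : Matrix (Fin n) (Fin n) ℂ := fun i j =>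
  if (i : ℕ) + (j : ℕ) + 1 = n then 1 else 0

/-- The `2n × 2n` matrix `J_{2n}` with block form `[[0, wₙ], [-wₙ, 0]]`. -/
noncomputable def JMat (n : ℕ) : Matrix (Fin (2 * n)) (Fin (2 * n)) ℂ :=
  Matrix.reindex (finSumFinEquiv.trans (finCongr (by omega)))
    (finSumFinEquiv.trans (finCongr (by omega)))
    (Matrix.fromBlocks 0 (wnMat n) (-(wnMat n)) 0)

/-- The matrix of the endomorphism `A = S ∘ ⋀ⁿ(J_{2n})` of `⋀ⁿ(ℂ^{2n})`. -/
noncomputable def Amat (n : ℕ) : Matrix (Idx n) (Idx n) ℂ :=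
  Smat n * wedgePow n (JMat n)

/-!
Both `S` and `⋀ⁿ(J_{2n})` are monomial matrices. `S` maps `e_I` to a multiple of `e_{Iᶜ}`. As
`J_{2n}` is antidiagonal with entries `±1`, each of its `n × n` minors is, up to a row reversal,
a diagonal determinant, so `⋀ⁿ(J_{2n})` maps `e_I` to `±e_{rev I}`, where `rev i = 2n + 1 - i`.
Complement and reversal commute, so the two products are supported on the same entries, and
comparing their signs is a parity count: each of the `n²` pairs in `Kᶜ × K` is either ascending
or descending, and `K` and `Kᶜ` together contain the `n` columns `≤ n`, where the nonzero entry
of `J_{2n}` is `-1`.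
-/

namespace Matrix

variable {ι R : Type*} [DecidableEq ι]

def IsMonomial [Zero R] (M : Matrix ι ι R) (σ : ι → ι) (f : ι → R) : Prop :=
  ∀ i j, M i j = if i = σ j then f j else 0

theorem IsMonomial.mul [Fintype ι] [NonUnitalNonAssocSemiring R] {M N : Matrix ι ι R}
    {σ τ : ι → ι} {f g : ι → R} (hM : M.IsMonomial σ f) (hN : N.IsMonomial τ g) :
    (M * N).IsMonomial (σ ∘ τ) fun k => f (τ k) * g k := by
  intro i k
  rw [mul_apply, Finset.sum_eq_single (τ k) (fun j _ hj => by rw [hN, if_neg hj, mul_zero])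
    (fun h => absurd (Finset.mem_univ _) h), hM, hN, if_pos rfl, Function.comp_apply]
  split_ifs <;> simp

end Matrix

namespace Finset

variable {m k : ℕ}

lemma image_rev_compl (S : Finset (Fin m)) : Sᶜ.image Fin.rev = (S.image Fin.rev)ᶜ := by
  ext x; simp [Fin.rev_eq_iff]

lemma card_filter_image_rev_product (X Y : Finset (Fin m)) :
    #{p ∈ X.image Fin.rev ×ˢ Y.image Fin.rev | p.2 < p.1} = #{p ∈ X ×ˢ Y | p.1 < p.2} := by
  rw [← prodMap_image_product, filter_image,
    card_image_of_injective _ (Fin.rev_injective.prodMap Fin.rev_injective)]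
  simp only [Prod.map_fst, Prod.map_snd, Fin.rev_lt_rev]

lemma card_filter_lt_add_card_filter_gt_of_disjoint {α : Type*} [LinearOrder α]
    {X Y : Finset α} (h : Disjoint X Y) :
    #{p ∈ X ×ˢ Y | p.1 < p.2} + #{p ∈ X ×ˢ Y | p.2 < p.1} = #X * #Y := by
  rw [← card_product, ← card_filter_add_card_filter_not (s := X ×ˢ Y) (fun p => p.1 < p.2)]
  congr 2
  refine filter_congr fun p hp => ?_
  have hne : p.1 ≠ p.2 := disjoint_iff_ne.mp h _ (mem_product.mp hp).1 _ (mem_product.mp hp).2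
  exact ⟨lt_asymm, fun hn => (not_lt.mp hn).lt_of_ne hne.symm⟩

lemma card_filter_add_card_filter_compl {α : Type*} [Fintype α] [DecidableEq α] (s : Finset α)
    (p : α → Prop) [DecidablePred p] : #{x ∈ s | p x} + #{x ∈ sᶜ | p x} = #{x | p x} := by
  rw [card_filter, card_filter, sum_add_sum_compl, card_filter]

lemma coe_orderIsoOfFin_image_rev (B : Finset (Fin m)) (hB : #B = k)
    (h : #(B.image Fin.rev) = k) (a : Fin k) :
    ((B.image Fin.rev).orderIsoOfFin h a : Fin m) = (B.orderIsoOfFin hB a.rev : Fin m).rev := by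
  have hmem : ∀ a : Fin k, (B.orderIsoOfFin hB a.rev : Fin m).rev ∈ B.image Fin.rev :=
    fun a => mem_image_of_mem _ (B.orderIsoOfFin hB a.rev).2
  have hmono : StrictMono fun a : Fin k => (B.orderIsoOfFin hB a.rev : Fin m).rev :=
    fun a b hab => Fin.rev_lt_rev.mpr ((B.orderIsoOfFin hB).strictMono (Fin.rev_lt_rev.mpr hab))
  rw [coe_orderIsoOfFin_apply, ← orderEmbOfFin_unique h hmem hmono]

end Finset

open Finset

lemma det_minor_of_antidiagonal {R : Type*} [CommRing R] {m k : ℕ}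
    {g : Matrix (Fin m) (Fin m) R} {c : Fin m → R}
    (hg : ∀ i j, g i j = if i = j.rev then c j else 0)
    (A B : Finset (Fin m)) (hA : #A = k) (hB : #B = k) :
    det (of fun a b => g (A.orderIsoOfFin hA a) (B.orderIsoOfFin hB b)) =
      if A = B.image Fin.rev then
        (Equiv.Perm.sign (Fin.revPerm : Equiv.Perm (Fin k)) : R) * ∏ b ∈ B, c b
      else 0 := by
  split_ifs with hAB
  · subst hAB
    have hminor : (of fun a b => g ((B.image Fin.rev).orderIsoOfFin hA a) (B.orderIsoOfFin hB b)) =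
        (diagonal fun b => c (B.orderIsoOfFin hB b)).submatrix Fin.revPerm id := by
      ext a b
      simp only [of_apply, hg, coe_orderIsoOfFin_image_rev B hB, Fin.rev_inj,
        Subtype.coe_inj, OrderIso.apply_eq_iff_eq, submatrix_apply, id, diagonal_apply,
        Fin.revPerm_apply]
      split_ifs with h
      · rw [h]
      · rfl
    rw [hminor, det_permute, det_diagonal, ← prod_coe_sort B,
      ← (B.orderIsoOfFin hB).toEquiv.prod_comp]
    rfl
  · have hsub : ¬ B.image Fin.rev ⊆ A := fun h =>
      hAB (eq_of_subset_of_card_le h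
        (by rw [card_image_of_injective _ Fin.rev_injective, hA, hB])).symm
    obtain ⟨x, hxB, hxA⟩ := not_subset.mp hsub
    obtain ⟨y, hy, rfl⟩ := mem_image.mp hxB
    refine det_eq_zero_of_column_eq_zero ((B.orderIsoOfFin hB).symm ⟨y, hy⟩) fun a => ?_
    rw [of_apply, hg, OrderIso.apply_symm_apply, if_neg]
    exact fun h => hxA (h ▸ (A.orderIsoOfFin hA a).2)

lemma JMat_apply (n : ℕ) (i j : Fin (2 * n)) :
    JMat n i j = if i = j.rev then (if (j : ℕ) < n then -1 else 1) else 0 := by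
  set e : Fin n ⊕ Fin n ≃ Fin (2 * n) := finSumFinEquiv.trans (finCongr (two_mul n).symm)
  obtain ⟨i, rfl⟩ := e.surjective i
  obtain ⟨j, rfl⟩ := e.surjective j
  change fromBlocks 0 (wnMat n) (-wnMat n) 0 (e.symm (e i)) (e.symm (e j)) = _
  rw [e.symm_apply_apply, e.symm_apply_apply]
  rcases i with i | i <;> rcases j with j | j <;>
    simp [e, wnMat, Fin.ext_iff, Fin.val_rev] <;>
    (try split_ifs) <;> first | omega | norm_num

def revIdx (n : ℕ) (I : Idx n) : Idx n :=
  ⟨I.1.image Fin.rev, by rw [card_image_of_injective _ Fin.rev_injective, I.2]⟩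

lemma coe_complIdx (n : ℕ) (I : Idx n) : (complIdx n I : Finset (Fin (2 * n))) = I.1ᶜ := rfl

lemma complIdx_revIdx (n : ℕ) (I : Idx n) : complIdx n (revIdx n I) = revIdx n (complIdx n I) :=
  Subtype.ext (image_rev_compl I.1).symm

lemma Smat_isMonomial (n : ℕ) :
    (Smat n).IsMonomial (complIdx n) fun J => qCoeff n (complIdx n J) J :=
  fun _ _ => rfl

lemma wedgePow_JMat_isMonomial (n : ℕ) :
    (wedgePow n (JMat n)).IsMonomial (revIdx n) fun J =>
      (Equiv.Perm.sign (Fin.revPerm : Equiv.Perm (Fin n)) : ℂ) *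
        (-1) ^ #{j ∈ J.1 | Fin.val j < n} := by
  intro I J
  rw [wedgePow, det_minor_of_antidiagonal (JMat_apply n), prod_ite, prod_const, prod_const_one,
    mul_one]
  exact if_congr (Subtype.ext_iff (a2 := revIdx n J)).symm rfl rfl

lemma qCoeff_complIdx (n : ℕ) (J : Idx n) :
    qCoeff n (complIdx n J) J = (-1) ^ #{p ∈ J.1ᶜ ×ˢ J.1 | p.2 < p.1} :=
  if_pos (compl_compl _).symm

lemma qCoeff_revIdx_complIdx (n : ℕ) (K : Idx n) :
    qCoeff n (revIdx n (complIdx n K)) (revIdx n K) =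
      (-1) ^ #{p ∈ K.1ᶜ ×ˢ K.1 | p.1 < p.2} := by
  rw [← complIdx_revIdx, qCoeff_complIdx, ← card_filter_image_rev_product, image_rev_compl]
  rfl

lemma neg_one_pow_inversions_compl (n : ℕ) (K : Idx n) :
    (-1 : ℂ) ^ #{p ∈ K.1ᶜ ×ˢ K.1 | p.1 < p.2} * (-1) ^ #{j ∈ K.1 | Fin.val j < n} =
      (-1) ^ #{j ∈ K.1ᶜ | Fin.val j < n} * (-1) ^ #{p ∈ K.1ᶜ ×ˢ K.1 | p.2 < p.1} := by
  set N₁ := #{p ∈ K.1ᶜ ×ˢ K.1 | p.1 < p.2}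
  set N₂ := #{p ∈ K.1ᶜ ×ˢ K.1 | p.2 < p.1}
  set c₁ := #{j ∈ K.1 | Fin.val j < n}
  set c₂ := #{j ∈ K.1ᶜ | Fin.val j < n}
  have hN : N₁ + N₂ = n * n := by
    rw [card_filter_lt_add_card_filter_gt_of_disjoint disjoint_compl_left, card_compl, K.2,
      Fintype.card_fin, show 2 * n - n = n by omega]
  have hc : c₁ + c₂ = n := by
    rw [card_filter_add_card_filter_compl, Fin.card_filter_val_lt]; omega
  have hsq : (n * n + n) % 2 = 0 := by
    simpa [Nat.even_iff, mul_add_one] using Nat.even_mul_succ_self n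
  rw [← pow_add, ← pow_add, neg_one_pow_eq_pow_mod_two,
    show (N₁ + c₁) % 2 = (c₂ + N₂) % 2 by omega, ← neg_one_pow_eq_pow_mod_two]

theorem Smat_commute_wedgePow_JMat_general (n : ℕ) :
    Smat n * wedgePow n (JMat n) = wedgePow n (JMat n) * Smat n := by
  ext I K
  rw [((Smat_isMonomial n).mul (wedgePow_JMat_isMonomial n)) I K,
    ((wedgePow_JMat_isMonomial n).mul (Smat_isMonomial n)) I K]
  simp only [Function.comp_apply, complIdx_revIdx, qCoeff_revIdx_complIdx, qCoeff_complIdx,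
    coe_complIdx]
  congr 1
  linear_combination (Equiv.Perm.sign (Fin.revPerm : Equiv.Perm (Fin n)) : ℂ) *
    neg_one_pow_inversions_compl n K

/-- The linear map `S` commutes with `⋀ⁿ(J_{2n})`:
`S ∘ ⋀ⁿ(J_{2n}) = ⋀ⁿ(J_{2n}) ∘ S` as endomorphisms of `⋀ⁿ(ℂ^{2n})`. -/
theorem Smat_commute_wedgePow_JMat (n : ℕ) (hn : 1 ≤ n) :
    Smat n * wedgePow n (JMat n) = wedgePow n (JMat n) * Smat n :=
  Smat_commute_wedgePow_JMat_general n
end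

section
/- For every invertible 2n×2n complex matrix g, one has A ∘ ⋀^n(g) ∘ A = det(g) · ⋀^n(J_{2n} · (gᵀ)⁻¹ · J_{2n}⁻¹) as endomorphisms of ⋀^n(ℂ^{2n}) (note A⁻¹ = A). -/
open Matrix

/-!
In the basis `e_I`, `S` is the Gram matrix of `q`, and `q(v, w)` is the coefficient of `v ∧ w`
on `e_1 ∧ ⋯ ∧ e_{2n}`; since `x v ∧ x w = det x • (v ∧ w)`, this gives
`⋀ⁿ(x)ᵀ S ⋀ⁿ(x) = det x • S`. Together with `S² = (-1)ⁿ` (the wedge pairing of two `n`-vectors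
is symmetric up to `(-1)^{n²}`) and Cauchy–Binet, it becomes
`S ⋀ⁿ(x) S = (-1)ⁿ det x • ⋀ⁿ((xᵀ)⁻¹)`. Putting `x = J g` and using `J² = -1`, `Jᵀ = -J` and
`det J = 1` gives the theorem.
-/

open Finset

namespace AlternatingMap

variable {R M N ι ι' : Type*} [CommRing R] [AddCommGroup M] [Module R M] [AddCommGroup N]
  [Module R N]

theorem sum_apply {α : Type*} (s : Finset α) (f : α → M [⋀^ι]→ₗ[R] N) (v : ι → M) :
    (∑ a ∈ s, f a) v = ∑ a ∈ s, f a v :=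
  map_sum (⟨⟨fun f => f v, rfl⟩, fun _ _ => rfl⟩ : (M [⋀^ι]→ₗ[R] N) →+ N) f s

def fixInr (f : M [⋀^ι ⊕ ι']→ₗ[R] N) (v : ι' → M) : M [⋀^ι]→ₗ[R] N where
  toFun u := f (Sum.elim u v)
  map_update_add' u i x y := by
    classical
    simp only [Sum.elim_update_left, f.map_update_add]
  map_update_smul' u i c x := by
    classical
    simp only [Sum.elim_update_left, f.map_update_smul]
  map_eq_zero_of_eq' u i j h hij :=
    f.map_eq_zero_of_eq (i := .inl i) (j := .inl j) _ h (Sum.inl_injective.ne hij)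

def fixInl (f : M [⋀^ι ⊕ ι']→ₗ[R] N) (u : ι → M) : M [⋀^ι']→ₗ[R] N where
  toFun v := f (Sum.elim u v)
  map_update_add' v i x y := by
    classical
    simp only [Sum.elim_update_right, f.map_update_add]
  map_update_smul' v i c x := by
    classical
    simp only [Sum.elim_update_right, f.map_update_smul]
  map_eq_zero_of_eq' v i j h hij :=
    f.map_eq_zero_of_eq (i := .inr i) (j := .inr j) _ h (Sum.inr_injective.ne hij)

@[simp]
theorem fixInr_apply (f : M [⋀^ι ⊕ ι']→ₗ[R] N) (u : ι → M) (v : ι' → M) :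
    f.fixInr v u = f (Sum.elim u v) := rfl

@[simp]
theorem fixInl_apply (f : M [⋀^ι ⊕ ι']→ₗ[R] N) (u : ι → M) (v : ι' → M) :
    f.fixInl u v = f (Sum.elim u v) := rfl

end AlternatingMap

section TupleMinor

variable {R N : Type*} [CommRing R] [AddCommGroup N] [Module R N] {m k : ℕ}

noncomputable def stdTuple (s : {s : Finset (Fin m) // #s = k}) : Fin k → Fin m → R :=
  fun a => Pi.single (s.1.orderEmbOfFin s.2 a) 1

/-- The coordinate of `u 0 ∧ ⋯ ∧ u (k - 1)` at `e_s`. -/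
noncomputable def tupleMinor (u : Fin k → Fin m → R) (s : {s : Finset (Fin m) // #s = k}) : R :=
  (Matrix.of fun a b => u a (s.1.orderEmbOfFin s.2 b)).det

theorem exists_mem_notMem_of_ne {s t : {s : Finset (Fin m) // #s = k}} (h : s ≠ t) :
    ∃ x ∈ s.1, x ∉ t.1 :=
  not_subset.mp fun hst => h (Subtype.ext (eq_of_subset_of_card_le hst (by rw [s.2, t.2])))

theorem exists_orderEmbOfFin_eq {α : Type*} [LinearOrder α] {s : Finset α} (h : #s = k) {x : α}
    (hx : x ∈ s) :
    ∃ a, s.orderEmbOfFin h a = x := by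
  simpa [← Set.mem_range, range_orderEmbOfFin] using hx

theorem tupleMinor_stdTuple (s t : {s : Finset (Fin m) // #s = k}) :
    tupleMinor (stdTuple s : Fin k → Fin m → R) t = if s = t then 1 else 0 := by
  split_ifs with hst
  · subst hst
    have h1 : (Matrix.of fun a b => stdTuple s a (s.1.orderEmbOfFin s.2 b)) =
        (1 : Matrix (Fin k) (Fin k) R) := by
      ext a b
      simp [stdTuple, Matrix.one_apply, Pi.single_apply, eq_comm]
    rw [tupleMinor, h1, Matrix.det_one]
  · obtain ⟨x, hxs, hxt⟩ := exists_mem_notMem_of_ne hst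
    obtain ⟨a, rfl⟩ := exists_orderEmbOfFin_eq s.2 hxs
    refine Matrix.det_eq_zero_of_row_eq_zero a fun b => ?_
    have : t.1.orderEmbOfFin t.2 b ≠ s.1.orderEmbOfFin s.2 a :=
      fun h => hxt (h ▸ orderEmbOfFin_mem _ _ _)
    simp [stdTuple, Pi.single_apply, this]

noncomputable def minorForm (s : {s : Finset (Fin m) // #s = k}) :
    (Fin m → R) [⋀^Fin k]→ₗ[R] R :=
  Matrix.detRowAlternating.compLinearMap (LinearMap.funLeft R R (s.1.orderEmbOfFin s.2))

theorem minorForm_apply (s : {s : Finset (Fin m) // #s = k}) (u : Fin k → Fin m → R) :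
    minorForm s u = tupleMinor u s := rfl

theorem AlternatingMap.ext_stdTuple {F G : (Fin m → R) [⋀^Fin k]→ₗ[R] N}
    (h : ∀ s, F (stdTuple s) = G (stdTuple s)) : F = G := by
  refine Module.Basis.ext_alternating (Pi.basisFun R (Fin m)) fun v hv => ?_
  set s : {s : Finset (Fin m) // #s = k} :=
    ⟨univ.image v, by rw [card_image_of_injective _ hv, card_univ, Fintype.card_fin]⟩
  have hsort : v ∘ Tuple.sort v = s.1.orderEmbOfFin s.2 :=
    orderEmbOfFin_unique s.2 (fun a => mem_image_of_mem v (mem_univ _))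
      ((Tuple.monotone_sort v).strictMono_of_injective (hv.comp (Tuple.sort v).injective))
  have hv' : (fun i => Pi.basisFun R (Fin m) (v i)) = stdTuple s ∘ (Tuple.sort v).symm := by
    ext i : 1
    simp [stdTuple, ← hsort]
  rw [hv', AlternatingMap.map_perm, AlternatingMap.map_perm, h]

theorem AlternatingMap.apply_eq_sum_tupleMinor (F : (Fin m → R) [⋀^Fin k]→ₗ[R] N)
    (u : Fin k → Fin m → R) : F u = ∑ s, tupleMinor u s • F (stdTuple s) := by
  have hF : F = ∑ s, (minorForm s).smulRight (F (stdTuple s)) := by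
    refine AlternatingMap.ext_stdTuple fun t => ?_
    simp [AlternatingMap.sum_apply, minorForm_apply, tupleMinor_stdTuple]
  conv_lhs => rw [hF]
  simp [AlternatingMap.sum_apply, minorForm_apply]

theorem AlternatingMap.apply_sumElim_eq_sum_tupleMinor {l : ℕ}
    (f : (Fin m → R) [⋀^Fin k ⊕ Fin l]→ₗ[R] N) (u : Fin k → Fin m → R) (v : Fin l → Fin m → R) :
    f (Sum.elim u v) = ∑ s, ∑ t,
      (tupleMinor u s * tupleMinor v t) • f (Sum.elim (stdTuple s) (stdTuple t)) := by
  rw [← f.fixInr_apply, apply_eq_sum_tupleMinor]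
  refine Finset.sum_congr rfl fun s _ => ?_
  rw [fixInr_apply, ← fixInl_apply, apply_eq_sum_tupleMinor, Finset.smul_sum]
  simp [mul_smul]

end TupleMinor

theorem Equiv.Perm.sign_eq_neg_one_pow_card_inversions {m : ℕ} (σ : Equiv.Perm (Fin m)) :
    σ.sign = (-1) ^ #{p : Fin m × Fin m | p.1 < p.2 ∧ σ p.2 < σ p.1} := by
  calc σ.sign = ∏ j, ∏ i ∈ Iio j, (if σ i < σ j then 1 else -1) := sign_eq_prod_prod_Iio σ
    _ = ∏ p : Fin m × Fin m with p.1 < p.2, (if σ p.1 < σ p.2 then 1 else -1) := by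
      rw [prod_filter, Fintype.prod_prod_type, prod_comm]
      refine prod_congr rfl fun j _ => ?_
      rw [← filter_gt_eq_Iio, prod_filter]
    _ = ∏ p : Fin m × Fin m with p.1 < p.2, (if σ p.2 < σ p.1 then -1 else 1) := by
      refine prod_congr rfl fun p hp => ?_
      have hne : σ p.1 ≠ σ p.2 := σ.injective.ne (mem_filter.mp hp).2.ne
      rcases lt_or_gt_of_ne hne with h | h <;> simp [h, h.not_gt]
    _ = _ := by rw [prod_ite, prod_const, prod_const_one, mul_one, filter_filter]

theorem card_filter_product_compl_add {α : Type*} [Fintype α] [LinearOrder α] (s : Finset α) :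
    #{p ∈ s ×ˢ sᶜ | p.2 < p.1} + #{p ∈ sᶜ ×ˢ s | p.2 < p.1} = #s * #sᶜ := by
  have hswap : #{p ∈ sᶜ ×ˢ s | p.2 < p.1} = #{p ∈ s ×ˢ sᶜ | ¬ p.2 < p.1} := by
    refine card_nbij' Prod.swap Prod.swap ?_ ?_ (fun p _ => rfl) (fun p _ => rfl)
    · intro p hp
      simp only [coe_filter, mem_product, mem_compl, Set.mem_ofPred_eq, Prod.fst_swap,
        Prod.snd_swap] at hp ⊢
      exact ⟨⟨hp.1.2, hp.1.1⟩, not_lt.mpr hp.2.le⟩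
    · intro p hp
      simp only [coe_filter, mem_product, mem_compl, Set.mem_ofPred_eq, Prod.fst_swap,
        Prod.snd_swap] at hp ⊢
      exact ⟨⟨hp.1.2, hp.1.1⟩,
        lt_of_le_of_ne (not_lt.mp hp.2) fun h => hp.1.2 (h ▸ hp.1.1)⟩
  rw [hswap, card_filter_add_card_filter_not, card_product]

section

variable {n : ℕ}

theorem complIdx_complIdx (s : Idx n) : complIdx n (complIdx n s) = s :=
  Subtype.ext (compl_compl _)

theorem qCoeff_eq_zero_of_ne {s t : Idx n} (h : t ≠ complIdx n s) : qCoeff n s t = 0 :=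
  if_neg fun h' => h (Subtype.ext h')

def blockEquiv (n : ℕ) : Fin n ⊕ Fin n ≃ Fin (2 * n) :=
  finSumFinEquiv.trans (finCongr (two_mul n).symm)

@[simp]
theorem blockEquiv_inl_val (a : Fin n) : (blockEquiv n (.inl a) : ℕ) = a := rfl

@[simp]
theorem blockEquiv_inr_val (b : Fin n) : (blockEquiv n (.inr b) : ℕ) = n + b := rfl

noncomputable def blockPerm (s : Idx n) : Equiv.Perm (Fin (2 * n)) :=
  (blockEquiv n).symm.trans (finSumEquivOfFinset s.2 (complIdx n s).2)

@[simp]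
theorem blockPerm_inl (s : Idx n) (a : Fin n) :
    blockPerm s (blockEquiv n (.inl a)) = s.1.orderEmbOfFin s.2 a := by
  rw [blockPerm, Equiv.trans_apply, Equiv.symm_apply_apply]
  rfl

@[simp]
theorem blockPerm_inr (s : Idx n) (b : Fin n) :
    blockPerm s (blockEquiv n (.inr b)) = (complIdx n s).1.orderEmbOfFin (complIdx n s).2 b := by
  rw [blockPerm, Equiv.trans_apply, Equiv.symm_apply_apply]
  rfl

/-- `blockPerm s` is increasing on each block, so its inversions go from the first block to the
second. -/
theorem blockPerm_inversion_iff (s : Idx n) (c d : Fin (2 * n)) :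
    c < d ∧ blockPerm s d < blockPerm s c ↔
      blockPerm s c ∈ s.1 ∧ blockPerm s d ∉ s.1 ∧ blockPerm s d < blockPerm s c := by
  obtain ⟨x, rfl⟩ := (blockEquiv n).surjective c
  obtain ⟨y, rfl⟩ := (blockEquiv n).surjective d
  have hs (a : Fin n) : s.1.orderEmbOfFin s.2 a ∈ s.1 := orderEmbOfFin_mem _ _ a
  have hc (b : Fin n) : (complIdx n s).1.orderEmbOfFin (complIdx n s).2 b ∉ s.1 :=
    mem_compl.mp (orderEmbOfFin_mem _ _ b)
  rcases x with a | b <;> rcases y with a' | b' <;>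
    simp only [Fin.lt_def (a := blockEquiv n _), blockEquiv_inl_val, blockEquiv_inr_val,
      add_lt_add_iff_left, Fin.val_fin_lt, blockPerm_inl, blockPerm_inr, OrderEmbedding.lt_iff_lt,
      hs, hc, not_true_eq_false, not_false_eq_true, true_and, false_and, and_false, and_self,
      iff_false, not_and, not_lt, and_iff_right_iff_imp] <;> omega

theorem card_inversions_blockPerm (s : Idx n) :
    #{p : Fin (2 * n) × Fin (2 * n) | p.1 < p.2 ∧ blockPerm s p.2 < blockPerm s p.1} =
      #{p ∈ s.1 ×ˢ s.1ᶜ | p.2 < p.1} := by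
  refine card_nbij' (fun p => (blockPerm s p.1, blockPerm s p.2))
    (fun p => ((blockPerm s).symm p.1, (blockPerm s).symm p.2)) ?_ ?_
    (fun p _ => by simp) (fun p _ => by simp)
  · intro p hp
    simp only [coe_filter, mem_univ, true_and, Set.mem_ofPred_eq, mem_product, mem_compl] at hp ⊢
    exact and_assoc.mpr ((blockPerm_inversion_iff s p.1 p.2).mp hp)
  · intro p hp
    simp only [coe_filter, mem_univ, true_and, Set.mem_ofPred_eq, mem_product, mem_compl] at hp ⊢
    simpa using (blockPerm_inversion_iff s ((blockPerm s).symm p.1) ((blockPerm s).symm p.2)).mpr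
      (by simpa using and_assoc.mp hp)

theorem qCoeff_compl (s : Idx n) :
    qCoeff n s (complIdx n s) = ((blockPerm s).sign : ℂ) := by
  rw [qCoeff, if_pos (show (complIdx n s).1 = s.1ᶜ from rfl),
    Equiv.Perm.sign_eq_neg_one_pow_card_inversions, card_inversions_blockPerm]
  push_cast
  rfl

/-- `topForm n (Sum.elim u v)` is the coefficient of `(u 0 ∧ ⋯) ∧ (v 0 ∧ ⋯)` on
`e_1 ∧ ⋯ ∧ e_{2n}`. -/
noncomputable def topForm (n : ℕ) : (Fin (2 * n) → ℂ) [⋀^Fin n ⊕ Fin n]→ₗ[ℂ] ℂ :=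
  (Pi.basisFun ℂ (Fin (2 * n))).det.domDomCongr (blockEquiv n).symm

theorem topForm_mulVec (x : Matrix (Fin (2 * n)) (Fin (2 * n)) ℂ)
    (w : Fin n ⊕ Fin n → Fin (2 * n) → ℂ) :
    topForm n (fun i => x *ᵥ w i) = x.det * topForm n w := by
  have := (Pi.basisFun ℂ (Fin (2 * n))).det_comp (Matrix.toLin' x) (w ∘ (blockEquiv n).symm)
  rw [LinearMap.det_toLin'] at this
  simpa [topForm, Function.comp_def] using this

theorem topForm_stdTuple (s t : Idx n) :
    topForm n (Sum.elim (stdTuple s) (stdTuple t)) = qCoeff n s t := by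
  by_cases ht : t = complIdx n s
  · subst ht
    have hperm : Sum.elim (stdTuple s) (stdTuple (complIdx n s)) ∘ (blockEquiv n).symm =
        Pi.basisFun ℂ (Fin (2 * n)) ∘ blockPerm s := by
      ext i : 1
      obtain ⟨x, rfl⟩ := (blockEquiv n).surjective i
      rcases x with a | b <;> simp [stdTuple]
    rw [topForm, AlternatingMap.domDomCongr_apply, hperm, AlternatingMap.map_perm,
      Module.Basis.det_self, qCoeff_compl, Units.smul_def, zsmul_eq_mul, mul_one]
  · rw [qCoeff_eq_zero_of_ne ht]
    obtain ⟨x, hxt, hxs⟩ := exists_mem_notMem_of_ne ht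
    obtain ⟨a, ha⟩ := exists_orderEmbOfFin_eq s.2 (not_not.mp (mem_compl.not.mp hxs))
    obtain ⟨b, hb⟩ := exists_orderEmbOfFin_eq t.2 hxt
    refine (topForm n).map_eq_zero_of_eq (i := .inl a) (j := .inr b) _ ?_ Sum.inl_ne_inr
    simp [stdTuple, ha, hb]

theorem topForm_sumElim (u v : Fin n → Fin (2 * n) → ℂ) :
    topForm n (Sum.elim u v) = q n (tupleMinor u) (tupleMinor v) := by
  rw [AlternatingMap.apply_sumElim_eq_sum_tupleMinor, q]
  simp [topForm_stdTuple]

theorem wedgePow_eq_tupleMinor_rows (g : Matrix (Fin (2 * n)) (Fin (2 * n)) ℂ) (I J : Idx n) :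
    wedgePow n g I J = tupleMinor (fun a => g (I.1.orderEmbOfFin I.2 a)) J := rfl

theorem wedgePow_eq_tupleMinor_cols (g : Matrix (Fin (2 * n)) (Fin (2 * n)) ℂ) (I J : Idx n) :
    wedgePow n g I J = tupleMinor (fun b => g *ᵥ stdTuple J b) I := by
  rw [wedgePow_eq_tupleMinor_rows, tupleMinor, tupleMinor, ← Matrix.det_transpose]
  congr 1
  ext a b
  simp [stdTuple]

theorem wedgePow_mul (g h : Matrix (Fin (2 * n)) (Fin (2 * n)) ℂ) :
    wedgePow n (g * h) = wedgePow n g * wedgePow n h := by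
  ext I K
  let F := (minorForm K).compLinearMap (Matrix.vecMulLinear h)
  have hF : ∀ u, F u = tupleMinor (fun a => u a ᵥ* h) K := fun u => rfl
  have hrows : (fun a => (g * h) (I.1.orderEmbOfFin I.2 a)) =
      fun a => g (I.1.orderEmbOfFin I.2 a) ᵥ* h := by
    ext a c
    simp [Matrix.mul_apply, Matrix.vecMul, dotProduct]
  rw [wedgePow_eq_tupleMinor_rows, hrows, ← hF, AlternatingMap.apply_eq_sum_tupleMinor,
    Matrix.mul_apply]
  refine Finset.sum_congr rfl fun J _ => ?_
  rw [hF, smul_eq_mul, wedgePow_eq_tupleMinor_rows, wedgePow_eq_tupleMinor_rows]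
  congr 1
  simp [stdTuple, Matrix.row]

theorem wedgePow_one : wedgePow n (1 : Matrix (Fin (2 * n)) (Fin (2 * n)) ℂ) = 1 := by
  ext I J
  have hrows : (fun a => (1 : Matrix (Fin (2 * n)) (Fin (2 * n)) ℂ) (I.1.orderEmbOfFin I.2 a)) =
      stdTuple I := by
    ext a c
    simp [stdTuple, Matrix.one_apply, Pi.single_apply, eq_comm]
  rw [wedgePow_eq_tupleMinor_rows, hrows, tupleMinor_stdTuple, Matrix.one_apply]

theorem wedgePow_transpose (g : Matrix (Fin (2 * n)) (Fin (2 * n)) ℂ) :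
    wedgePow n gᵀ = (wedgePow n g)ᵀ := by
  ext I J
  rw [Matrix.transpose_apply, wedgePow, wedgePow, ← Matrix.det_transpose]
  rfl

theorem wedgePow_neg (g : Matrix (Fin (2 * n)) (Fin (2 * n)) ℂ) :
    wedgePow n (-g) = (-1 : ℂ) ^ n • wedgePow n g := by
  ext I J
  have hneg : (Matrix.of fun a b => (-g) (I.1.orderEmbOfFin I.2 a) (J.1.orderEmbOfFin J.2 b)) =
      -Matrix.of fun a b => g (I.1.orderEmbOfFin I.2 a) (J.1.orderEmbOfFin J.2 b) := rfl
  rw [Matrix.smul_apply, smul_eq_mul, wedgePow_eq_tupleMinor_rows, wedgePow_eq_tupleMinor_rows,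
    tupleMinor, tupleMinor, hneg, Matrix.det_neg, Fintype.card_fin]

theorem qCoeff_mul_qCoeff_compl (s : Idx n) :
    qCoeff n s (complIdx n s) * qCoeff n (complIdx n s) s = (-1) ^ n := by
  have hcard : #{p ∈ s.1 ×ˢ (complIdx n s).1 | p.2 < p.1} +
      #{p ∈ (complIdx n s).1 ×ˢ s.1 | p.2 < p.1} = n * n :=
    (card_filter_product_compl_add s.1).trans
      (by rw [card_compl, s.2, Fintype.card_fin, two_mul, Nat.add_sub_cancel])
  rw [qCoeff, if_pos (show (complIdx n s).1 = s.1ᶜ from rfl), qCoeff,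
    if_pos (show s.1 = (complIdx n s).1ᶜ from (compl_compl s.1).symm), ← pow_add, hcard]
  rcases n.even_or_odd with h | h
  · rw [(h.mul_right n).neg_one_pow, h.neg_one_pow]
  · rw [(h.mul h).neg_one_pow, h.neg_one_pow]

theorem Smat_eq_of_qCoeff : Smat n = Matrix.of (qCoeff n) := by
  ext I J
  by_cases h : I = complIdx n J
  · subst h
    rw [Smat, if_pos rfl]
    rfl
  · rw [Smat, if_neg h, Matrix.of_apply, qCoeff_eq_zero_of_ne]
    rintro rfl
    exact h (complIdx_complIdx I).symm

theorem Smat_mul_Smat : Smat n * Smat n = (-1 : ℂ) ^ n • 1 := by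
  ext I K
  rw [Smat_eq_of_qCoeff, Matrix.mul_apply, Finset.sum_eq_single (complIdx n I)
    (fun L _ hL => by rw [Matrix.of_apply, qCoeff_eq_zero_of_ne hL, zero_mul]) (by simp)]
  by_cases h : K = I
  · subst h
    simp [qCoeff_mul_qCoeff_compl]
  · rw [Matrix.of_apply, Matrix.of_apply, qCoeff_eq_zero_of_ne (t := K), Matrix.smul_apply,
      Matrix.one_apply_ne' h]
    · simp
    · rwa [complIdx_complIdx]

theorem wedgePow_transpose_mul_Smat_mul_wedgePow (x : Matrix (Fin (2 * n)) (Fin (2 * n)) ℂ) :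
    (wedgePow n x)ᵀ * Smat n * wedgePow n x = x.det • Smat n := by
  ext J K
  have hq : ((wedgePow n x)ᵀ * Smat n * wedgePow n x) J K =
      q n (fun I => wedgePow n x I J) (fun L => wedgePow n x L K) := by
    simp only [Smat_eq_of_qCoeff, Matrix.mul_apply, Matrix.transpose_apply, Matrix.of_apply, q,
      Finset.sum_mul]
    rw [Finset.sum_comm]
    exact Finset.sum_congr rfl fun I _ => Finset.sum_congr rfl fun L _ => by ring
  have hcols (M : Idx n) :
      (fun I => wedgePow n x I M) = tupleMinor (fun b => x *ᵥ stdTuple M b) :=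
    funext fun I => wedgePow_eq_tupleMinor_cols x I M
  have helim : Sum.elim (fun b => x *ᵥ stdTuple J b) (fun b => x *ᵥ stdTuple K b) =
      fun i => x *ᵥ Sum.elim (stdTuple J) (stdTuple K) i := by
    ext (i | i) : 1 <;> rfl
  rw [hq, hcols, hcols, ← topForm_sumElim, helim, topForm_mulVec, topForm_stdTuple,
    Matrix.smul_apply, Smat_eq_of_qCoeff, Matrix.of_apply, smul_eq_mul]

theorem Smat_mul_wedgePow_mul_Smat (x : Matrix (Fin (2 * n)) (Fin (2 * n)) ℂ)
    (hx : IsUnit x.det) :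
    Smat n * wedgePow n x * Smat n = ((-1) ^ n * x.det) • wedgePow n (xᵀ)⁻¹ := by
  have hinv : wedgePow n (xᵀ)⁻¹ * (wedgePow n x)ᵀ = 1 := by
    rw [← Matrix.transpose_nonsing_inv, wedgePow_transpose, ← Matrix.transpose_mul,
      ← wedgePow_mul, Matrix.mul_nonsing_inv x hx, wedgePow_one, Matrix.transpose_one]
  calc Smat n * wedgePow n x * Smat n
      = wedgePow n (xᵀ)⁻¹ * ((wedgePow n x)ᵀ * Smat n * wedgePow n x) * Smat n := by
        simp only [← Matrix.mul_assoc, hinv, Matrix.one_mul]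
    _ = x.det • (wedgePow n (xᵀ)⁻¹ * (Smat n * Smat n)) := by
        rw [wedgePow_transpose_mul_Smat_mul_wedgePow, Matrix.mul_smul, Matrix.smul_mul,
          Matrix.mul_assoc]
    _ = ((-1) ^ n * x.det) • wedgePow n (xᵀ)⁻¹ := by
        rw [Smat_mul_Smat, Matrix.mul_smul, Matrix.mul_one, smul_smul, mul_comm]

theorem wnMat_eq_permMatrix : wnMat n = (Fin.revPerm : Equiv.Perm (Fin n)).permMatrix ℂ := by
  ext i j
  simp only [wnMat, PEquiv.toMatrix_apply, Equiv.toPEquiv_apply, Option.mem_def,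
    Option.some.injEq, Fin.revPerm_apply, Fin.ext_iff, Fin.val_rev]
  congr 1
  apply propext
  omega

theorem wnMat_mul_wnMat : wnMat n * wnMat n = 1 := by
  rw [wnMat_eq_permMatrix, ← Matrix.permMatrix_mul,
    show (Fin.revPerm : Equiv.Perm (Fin n)) * Fin.revPerm = 1 from Equiv.ext Fin.rev_rev,
    Matrix.permMatrix_one]

theorem wnMat_transpose : (wnMat n)ᵀ = wnMat n := by
  rw [wnMat_eq_permMatrix, Matrix.transpose_permMatrix, Equiv.Perm.inv_def, Fin.revPerm_symm]

theorem JMat_eq : JMat n = Matrix.reindex (blockEquiv n) (blockEquiv n)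
    (Matrix.fromBlocks 0 (wnMat n) (-wnMat n) 0) := rfl

theorem JMat_mul_JMat : JMat n * JMat n = -1 := by
  have hblock : Matrix.fromBlocks 0 (wnMat n) (-wnMat n) 0 *
      Matrix.fromBlocks 0 (wnMat n) (-wnMat n) 0 = (-1 : Matrix (Fin n ⊕ Fin n) _ ℂ) := by
    rw [Matrix.fromBlocks_multiply, ← Matrix.fromBlocks_one, Matrix.fromBlocks_neg]
    simp [wnMat_mul_wnMat]
  rw [JMat_eq, Matrix.reindex_apply, Matrix.submatrix_mul_equiv, hblock]
  exact congrArg Neg.neg (Matrix.submatrix_one_equiv _)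

theorem JMat_transpose : (JMat n)ᵀ = -JMat n := by
  have hblock : (Matrix.fromBlocks 0 (wnMat n) (-wnMat n) 0)ᵀ =
      -Matrix.fromBlocks 0 (wnMat n) (-wnMat n) (0 : Matrix (Fin n) (Fin n) ℂ) := by
    rw [Matrix.fromBlocks_transpose, Matrix.fromBlocks_neg, Matrix.transpose_neg, wnMat_transpose,
      Matrix.transpose_zero, neg_zero, neg_neg]
  rw [JMat_eq, Matrix.reindex_apply, Matrix.transpose_submatrix, hblock]
  rfl

theorem det_JMat : (JMat n).det = 1 := by
  have hfac : Matrix.fromBlocks 0 (wnMat n) (-wnMat n) 0 =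
      Matrix.fromBlocks 1 0 (-wnMat n) 1 * Matrix.fromBlocks 1 (wnMat n) 0 1 *
        Matrix.fromBlocks 1 0 (-wnMat n) 1 := by
    simp [Matrix.fromBlocks_multiply, wnMat_mul_wnMat]
  rw [JMat_eq, Matrix.det_reindex_self, hfac, Matrix.det_mul, Matrix.det_mul,
    Matrix.det_fromBlocks_zero₁₂, Matrix.det_fromBlocks_zero₂₁]
  simp

end

theorem Amat_conj_wedgePow_general (n : ℕ)
    (g : Matrix (Fin (2 * n)) (Fin (2 * n)) ℂ) (hg : IsUnit g.det) :
    Amat n * wedgePow n g * Amat n =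
      g.det • wedgePow n (JMat n * (gᵀ)⁻¹ * (JMat n)⁻¹) := by
  have hJinv : (JMat n)⁻¹ = -JMat n :=
    Matrix.inv_eq_right_inv (by rw [Matrix.mul_neg, JMat_mul_JMat, neg_neg])
  have hJtinv : ((JMat n)ᵀ)⁻¹ = JMat n :=
    Matrix.inv_eq_right_inv (by rw [JMat_transpose, Matrix.neg_mul, JMat_mul_JMat, neg_neg])
  have hdet : (JMat n * g).det = g.det := by rw [Matrix.det_mul, det_JMat, one_mul]
  calc Amat n * wedgePow n g * Amat n
      = Smat n * wedgePow n (JMat n * g) * Smat n * wedgePow n (JMat n) := by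
        simp only [Amat, wedgePow_mul, Matrix.mul_assoc]
    _ = ((-1) ^ n * g.det) • wedgePow n (JMat n * (gᵀ)⁻¹ * JMat n) := by
        rw [Smat_mul_wedgePow_mul_Smat _ (hdet ▸ hg), hdet, Matrix.transpose_mul,
          Matrix.mul_inv_rev, hJtinv, Matrix.smul_mul, ← wedgePow_mul]
    _ = g.det • wedgePow n (JMat n * (gᵀ)⁻¹ * (JMat n)⁻¹) := by
        rw [hJinv, Matrix.mul_neg, wedgePow_neg, smul_smul, mul_comm]

/-- For every invertible `2n × 2n` complex matrix `g`,
`A ∘ ⋀ⁿ(g) ∘ A = det(g) · ⋀ⁿ(J_{2n} · (gᵀ)⁻¹ · J_{2n}⁻¹)` (note `A⁻¹ = A`). -/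
theorem Amat_conj_wedgePow (n : ℕ) (hn : 1 ≤ n)
    (g : Matrix (Fin (2 * n)) (Fin (2 * n)) ℂ) (hg : IsUnit g.det) :
    Amat n * wedgePow n g * Amat n =
      g.det • wedgePow n (JMat n * (gᵀ)⁻¹ * (JMat n)⁻¹) :=
  Amat_conj_wedgePow_general n g hg
end

section
/- Let R be a commutative ring, x ∈ R, S an m×m matrix and T a p×p matrix over R. Then det(1 − x · ((S ⊕ (−S)) ⊗ (T ⊕ (−T)))) = det(1 − x² · (S² ⊗ T²))², where M ⊕ N denotes the block-diagonal matrix with blocks M and N, ⊗ denotes the Kronecker product, and 1 denotes the identity matrix of the appropriate size. -/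
/-!
Reindexing turns `(S ⊕ -S) ⊗ (T ⊕ -T)` into the block-diagonal matrix with blocks
`S ⊗ T, -(S ⊗ T), -(S ⊗ T), S ⊗ T`, so after scaling `S` by `x` the determinant is
`(det(1 - A) * det(1 + A))²` with `A = x • S ⊗ T`, and `(1 - A)(1 + A) = 1 - A²` where
`A² = x² • (S² ⊗ T²)`.
-/

open Matrix Kronecker

namespace Matrix

variable {R l m n o p q α : Type*}

section Kronecker

theorem neg_kronecker [Mul α] [HasDistribNeg α] (A : Matrix l m α) (B : Matrix n p α) :
    (-A) ⊗ₖ B = -(A ⊗ₖ B) := by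
  ext ⟨i, k⟩ ⟨j, l⟩
  simp [neg_mul]

theorem kronecker_neg [Mul α] [HasDistribNeg α] (A : Matrix l m α) (B : Matrix n p α) :
    A ⊗ₖ (-B) = -(A ⊗ₖ B) := by
  ext ⟨i, k⟩ ⟨j, l⟩
  simp [mul_neg]

theorem fromBlocks_kronecker [Mul α] (A : Matrix l n α) (B : Matrix l o α) (C : Matrix m n α)
    (D : Matrix m o α) (M : Matrix p q α) :
    fromBlocks A B C D ⊗ₖ M =
      (fromBlocks (A ⊗ₖ M) (B ⊗ₖ M) (C ⊗ₖ M) (D ⊗ₖ M)).submatrix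
        (Equiv.sumProdDistrib l m p) (Equiv.sumProdDistrib n o q) := by
  ext ⟨i | i, k⟩ ⟨j | j, l⟩ <;> rfl

theorem kronecker_fromBlocks [Mul α] (M : Matrix p q α) (A : Matrix l n α) (B : Matrix l o α)
    (C : Matrix m n α) (D : Matrix m o α) :
    M ⊗ₖ fromBlocks A B C D =
      (fromBlocks (M ⊗ₖ A) (M ⊗ₖ B) (M ⊗ₖ C) (M ⊗ₖ D)).submatrix
        (Equiv.prodSumDistrib p l m) (Equiv.prodSumDistrib q n o) := by
  ext ⟨k, i | i⟩ ⟨l, j | j⟩ <;> rfl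

end Kronecker

section Determinant

variable [CommRing R] [Fintype m] [Fintype n] [Fintype o] [DecidableEq m] [DecidableEq n]
  [DecidableEq o]

theorem det_one_sub_submatrix_equiv_self (e : o ≃ n) (M : Matrix n n R) :
    (1 - M.submatrix e e).det = (1 - M).det := by
  rw [← det_submatrix_equiv_self e (1 - M), ← submatrix_one_equiv e]
  rfl

theorem det_one_sub_fromBlocks_zero (A : Matrix m m R) (D : Matrix n n R) :
    (1 - fromBlocks A 0 0 D).det = (1 - A).det * (1 - D).det := by
  rw [← fromBlocks_one, sub_eq_add_neg, fromBlocks_neg, fromBlocks_add]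
  simp only [neg_zero, add_zero, ← sub_eq_add_neg]
  exact det_fromBlocks_zero₂₁ _ _ _

theorem det_one_sub_mul_det_one_add (A : Matrix n n R) :
    (1 - A).det * (1 + A).det = (1 - A * A).det := by
  rw [← det_mul]
  congr 1
  noncomm_ring

theorem det_one_sub_kronecker_fromBlocks_neg (A : Matrix m m R) (T : Matrix n n R) :
    (1 - A ⊗ₖ fromBlocks T 0 0 (-T)).det = (1 - (A * A) ⊗ₖ (T * T)).det := by
  rw [kronecker_fromBlocks, kronecker_zero, det_one_sub_submatrix_equiv_self,
    det_one_sub_fromBlocks_zero, kronecker_neg, sub_neg_eq_add, det_one_sub_mul_det_one_add,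
    mul_kronecker_mul]

theorem det_one_sub_fromBlocks_neg_kronecker_fromBlocks_neg (S : Matrix m m R)
    (T : Matrix n n R) :
    (1 - fromBlocks S 0 0 (-S) ⊗ₖ fromBlocks T 0 0 (-T)).det =
      (1 - (S * S) ⊗ₖ (T * T)).det ^ 2 := by
  rw [fromBlocks_kronecker, zero_kronecker, det_one_sub_submatrix_equiv_self,
    det_one_sub_fromBlocks_zero, det_one_sub_kronecker_fromBlocks_neg,
    det_one_sub_kronecker_fromBlocks_neg, neg_mul_neg, sq]

end Determinant

end Matrix

/-- For a commutative ring `R`, `x ∈ R`, an `m × m` matrix `S` and a `p × p` matrix `T`: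
`det(1 - x·((S ⊕ (-S)) ⊗ (T ⊕ (-T)))) = det(1 - x²·(S² ⊗ T²))²`,
where `⊕` is the block-diagonal sum and `⊗` the Kronecker product. -/
theorem det_one_sub_smul_kronecker_plusMinus {R : Type*} [CommRing R] (x : R)
    {m p : ℕ} (S : Matrix (Fin m) (Fin m) R) (T : Matrix (Fin p) (Fin p) R) :
    (1 - x • (Matrix.fromBlocks S 0 0 (-S) ⊗ₖ Matrix.fromBlocks T 0 0 (-T))).det =
      (1 - x ^ 2 • ((S * S) ⊗ₖ (T * T))).det ^ 2 := by
  have hS : x • fromBlocks S 0 0 (-S) = fromBlocks (x • S) 0 0 (-(x • S)) := by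
    rw [fromBlocks_smul, smul_zero, smul_neg]
  have hsq : x ^ 2 • ((S * S) ⊗ₖ (T * T)) = ((x • S) * (x • S)) ⊗ₖ (T * T) := by
    rw [smul_mul_smul_comm, ← sq x, smul_kronecker]
  rw [← smul_kronecker, hS, hsq, det_one_sub_fromBlocks_neg_kronecker_fromBlocks_neg]
end

section
/- Let E be a field, σ a field automorphism of E, n an odd natural number, and let J, g be invertible n×n matrices over E. Suppose λ ∈ E^× satisfies σ(λ) = λ and (σ(g))ᵀ · J · g = λ · J, where σ(g) denotes entrywise application of σ. Then there exists z ∈ E^× with z · σ(z) = λ, and consequently u := z⁻¹ · g satisfies (σ(u))ᵀ · J · u = J; i.e., every unitary similitude g factors as a scalar times a unitary element. -/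
/-!
Taking determinants in `σ(g)ᵀ J g = λ J` shows that `λⁿ = σ(det g) · det g` is a norm. Since
`λ = σ(λ)`, also `λ² = λ · σ(λ)` is a norm, so for `n = 2k + 1` the element
`λ = λⁿ / (λᵏ)²` is the norm of `z = det g / λᵏ`. Rescaling `g` by `z⁻¹` divides the
similitude factor by `z · σ(z) = λ`.
-/

open Matrix

section Similitude

variable {R ι : Type*} [CommRing R] [Fintype ι] (σ : R →+* R)

theorem mul_det_eq_pow_card_of_similitude [DecidableEq ι] {J g : Matrix ι ι R}
    (hJ : IsUnit J.det) {lam : R} (hsim : (g.map σ)ᵀ * J * g = lam • J) :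
    σ g.det * g.det = lam ^ Fintype.card ι := by
  have hdet := congrArg Matrix.det hsim
  rw [det_mul, det_mul, det_transpose, det_smul, ← RingHom.mapMatrix_apply, ← σ.map_det,
    mul_right_comm] at hdet
  exact hJ.mul_left_injective hdet

theorem similitude_smul {J g : Matrix ι ι R} {lam : R}
    (hsim : (g.map σ)ᵀ * J * g = lam • J) (c : R) :
    ((c • g).map σ)ᵀ * J * (c • g) = (σ c * c * lam) • J := by
  rw [map_smul' _ _ _ (map_mul σ), transpose_smul, smul_mul, smul_mul, Matrix.mul_smul, hsim,
    smul_smul, smul_smul]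

end Similitude

theorem exists_mul_map_eq_of_pow_odd {E : Type*} [Field E] (σ : E →+* E) {n : ℕ} (hn : Odd n)
    {lam d : E} (hlam : lam ≠ 0) (hfix : σ lam = lam) (hnorm : σ d * d = lam ^ n) :
    ∃ z : E, z * σ z = lam := by
  obtain ⟨k, rfl⟩ := hn
  refine ⟨d / lam ^ k, ?_⟩
  rw [map_div₀, map_pow, hfix]
  field_simp
  linear_combination hnorm

theorem unitary_similitude_factors_general {E : Type*} [Field E] (σ : E ≃+* E)
    (n : ℕ) (hn : Odd n)
    (J g : Matrix (Fin n) (Fin n) E) (hJ : IsUnit J.det)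
    (lam : E) (hlam : lam ≠ 0) (hfix : σ lam = lam)
    (hsim : (g.map σ)ᵀ * J * g = lam • J) :
    ∃ z : E, z ≠ 0 ∧ z * σ z = lam ∧
      ((z⁻¹ • g).map σ)ᵀ * J * (z⁻¹ • g) = J := by
  have hnorm := mul_det_eq_pow_card_of_similitude (σ : E →+* E) hJ hsim
  rw [Fintype.card_fin] at hnorm
  obtain ⟨z, hz⟩ := exists_mul_map_eq_of_pow_odd (σ : E →+* E) hn hlam hfix hnorm
  have hz0 : z ≠ 0 := left_ne_zero_of_mul (hz ▸ hlam)
  refine ⟨z, hz0, hz, ?_⟩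
  have hunit := similitude_smul (σ : E →+* E) hsim z⁻¹
  rw [map_inv₀, ← mul_inv, mul_comm _ z, hz, inv_mul_cancel₀ hlam, one_smul] at hunit
  exact hunit

/-- Let `E` be a field with a field automorphism `σ`, `n` odd, and `J, g` invertible `n × n`
matrices over `E`. If `λ ∈ E^×` satisfies `σ(λ) = λ` and `(σ(g))ᵀ · J · g = λ · J`, then
there is `z ∈ E^×` with `z · σ(z) = λ`, and `u = z⁻¹ · g` satisfies `(σ(u))ᵀ · J · u = J`:
every unitary similitude factors as a scalar times a unitary element. -/
theorem unitary_similitude_factors {E : Type*} [Field E] (σ : E ≃+* E)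
    (n : ℕ) (hn : Odd n)
    (J g : Matrix (Fin n) (Fin n) E) (hJ : IsUnit J.det) (hg : IsUnit g.det)
    (lam : E) (hlam : lam ≠ 0) (hfix : σ lam = lam)
    (hsim : (g.map σ)ᵀ * J * g = lam • J) :
    ∃ z : E, z ≠ 0 ∧ z * σ z = lam ∧
      ((z⁻¹ • g).map σ)ᵀ * J * (z⁻¹ • g) = J :=
  unitary_similitude_factors_general σ n hn J g hJ lam hlam hfix hsim
end

section
/- Let R be a commutative ring and a, b : ℕ → R. Define A_k = Σ_{i ≥ 0, 2i ≤ k} a_{k−2i}, B_m = Σ_{j ≥ 0, 2j ≤ m} b_{m−2j}, and C_r = Σ_{k,m ≥ 0, 2k+m = r} A_k · B_m for integers r ≥ 0, with the convention C_r = 0 for r < 0. Then for every r ≥ 0: C_r − C_{r−2} − C_{r−4} + C_{r−6} = Σ_{k,m ≥ 0, 2k+m = r} a_k · b_m. -/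
/-!
With `a(t) = Σ aₖ tᵏ` and `b(t) = Σ bₘ tᵐ`, the definitions say `Σ Aₖ tᵏ = a(t) / (1 - t²)`,
`Σ Bₘ tᵐ = b(t) / (1 - t²)` and `Σ C_r tʳ = A(t²) B(t)`. Hence
`(1 - t²)(1 - t⁴) Σ C_r tʳ = a(t²) b(t)`, and comparing the coefficients of `tʳ` gives the identity.
-/

open PowerSeries

namespace PowerSeries

variable {R : Type*} [CommRing R]

theorem coeff_expand_mul_eq_sum (p : ℕ) (hp : p ≠ 0) (φ ψ : R⟦X⟧) (n : ℕ) :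
    coeff n (expand p hp φ * ψ) =
      ∑ k ∈ Finset.range (n / p + 1), coeff k φ * coeff (n - p * k) ψ := by
  have mem_range_iff {k : ℕ} : k ∈ Finset.range (n / p + 1) ↔ p * k ≤ n := by
    rw [Finset.mem_range, Nat.lt_succ_iff, Nat.le_div_iff_mul_le (Nat.pos_of_ne_zero hp),
      mul_comm]
  have hinj : Set.InjOn (fun k ↦ (p * k, n - p * k)) (Finset.range (n / p + 1)) :=
    fun k _ l _ h ↦ Nat.eq_of_mul_eq_mul_left (Nat.pos_of_ne_zero hp) (Prod.ext_iff.1 h).1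
  rw [coeff_mul, ← Finset.sum_subset
      (s₁ := (Finset.range (n / p + 1)).image fun k ↦ (p * k, n - p * k)),
    Finset.sum_image hinj]
  · simp only [coeff_expand_mul]
  · intro x hx
    obtain ⟨k, hk, rfl⟩ := Finset.mem_image.1 hx
    rw [Finset.HasAntidiagonal.mem_antidiagonal, Nat.add_sub_of_le (mem_range_iff.1 hk)]
  · rintro ⟨i, j⟩ hij hx
    rw [coeff_expand_of_not_dvd, zero_mul]
    rintro ⟨k, rfl⟩
    have hsum : p * k + j = n := Finset.HasAntidiagonal.mem_antidiagonal.1 hij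
    exact hx (Finset.mem_image.2 ⟨k, mem_range_iff.2 (by lia), Prod.ext rfl (by lia)⟩)

theorem one_sub_X_pow_mul_expand_mk_one (p : ℕ) (hp : p ≠ 0) :
    (1 - X ^ p) * expand p hp (mk 1 : R⟦X⟧) = 1 := by
  rw [← expand_X p hp, ← map_one (expand p hp), ← map_sub, ← map_mul, mul_comm,
    mk_one_mul_one_sub_eq_one]

theorem coeff_X_pow_mul_mk_natCast (c : ℤ → R) (hc : ∀ r < 0, c r = 0) (n r : ℕ) :
    coeff r (X ^ n * mk fun m : ℕ ↦ c m) = c ((r : ℤ) - n) := by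
  rw [coeff_X_pow_mul', coeff_mk]
  split_ifs with h
  · rw [Nat.cast_sub h]
  · rw [hc _ (by lia)]

end PowerSeries

/-- Let `R` be a commutative ring and `a, b : ℕ → R`. With
`A_k = Σ_{2i ≤ k} a_{k-2i}`, `B_m = Σ_{2j ≤ m} b_{m-2j}`,
`C_r = Σ_{2k+m = r} A_k · B_m` for `r ≥ 0` and `C_r = 0` for `r < 0`, one has, for every
`r ≥ 0`: `C_r - C_{r-2} - C_{r-4} + C_{r-6} = Σ_{2k+m = r} a_k · b_m`. -/
theorem C_alternating_sum {R : Type*} [CommRing R] (a b : ℕ → R)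
    (A B : ℕ → R) (C : ℤ → R)
    (hA : ∀ k : ℕ, A k = ∑ i ∈ Finset.range (k / 2 + 1), a (k - 2 * i))
    (hB : ∀ m : ℕ, B m = ∑ j ∈ Finset.range (m / 2 + 1), b (m - 2 * j))
    (hCneg : ∀ r : ℤ, r < 0 → C r = 0)
    (hC : ∀ r : ℕ, C r = ∑ k ∈ Finset.range (r / 2 + 1), A k * B (r - 2 * k))
    (r : ℕ) :
    C r - C ((r : ℤ) - 2) - C ((r : ℤ) - 4) + C ((r : ℤ) - 6) =
      ∑ k ∈ Finset.range (r / 2 + 1), a k * b (r - 2 * k) := by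
  set G : R⟦X⟧ := expand 2 two_ne_zero (mk 1)
  set Cs : R⟦X⟧ := mk fun n : ℕ ↦ C n
  have hA_mk : mk A = G * mk a := by ext k; simp [G, hA, coeff_expand_mul_eq_sum]
  have hB_mk : mk B = G * mk b := by ext m; simp [G, hB, coeff_expand_mul_eq_sum]
  have hC_mk : Cs = expand 2 two_ne_zero (mk A) * mk B := by
    ext n; simp [Cs, hC, coeff_expand_mul_eq_sum]
  have hA_expand :
      (1 - X ^ 4) * expand 2 two_ne_zero (mk A) = expand 2 two_ne_zero (mk a) := by
    rw [hA_mk, map_mul, ← mul_assoc, show (1 - X ^ 4 : R⟦X⟧) = expand 2 two_ne_zero (1 - X ^ 2) by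
      simp [← pow_mul], ← map_mul, one_sub_X_pow_mul_expand_mk_one, map_one, one_mul]
  have key : (1 - X ^ 2) * (1 - X ^ 4) * Cs = expand 2 two_ne_zero (mk a) * mk b :=
    calc (1 - X ^ 2) * (1 - X ^ 4) * Cs
        = ((1 - X ^ 4) * expand 2 two_ne_zero (mk A)) * ((1 - X ^ 2) * G) * mk b := by
          rw [hC_mk, hB_mk]; ring
      _ = expand 2 two_ne_zero (mk a) * mk b := by
          rw [hA_expand, one_sub_X_pow_mul_expand_mk_one, mul_one]
  have hcoeff := congrArg (coeff r) key
  rw [coeff_expand_mul_eq_sum, show (1 - X ^ 2) * (1 - X ^ 4) * Cs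
    = X ^ 0 * Cs - X ^ 2 * Cs - X ^ 4 * Cs + X ^ 6 * Cs by ring] at hcoeff
  simpa only [Cs, map_add, map_sub, coeff_X_pow_mul_mk_natCast C hCneg, coeff_mk,
    Nat.cast_ofNat, CharP.cast_eq_zero, sub_zero] using hcoeff
end
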